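/- Let S be a numerical semigroup with S ≠ ℕ. Then A(S̃) has at most one small atom. Moreover, if S has more than one small atom, then A(S̃) has no small atoms, i.e., A(S̃) = {0} ∪ {n : n ≥ F(S̃) + 1}. -/

import Mathlib

open Set

def IsNumericalSet (S : Set ℕ) : Prop := 0 ∈ S ∧ Sᶜ.Finite

def IsNumericalSemigroup (S : Set ℕ) : Prop :=
  IsNumericalSet S ∧ ∀ a ∈ S, ∀ b ∈ S, a + b ∈ S

/-- The associated set `A(S) = {s ∈ S : s + S ⊆ S}`. -/
def A (S : Set ℕ) : Set ℕ := {s ∈ S | ∀ t ∈ S, s + t ∈ S}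

/-- The Frobenius number: the largest gap of `S`. -/
noncomputable def F (S : Set ℕ) : ℕ := sSup Sᶜ

/-- The base: the largest element of `S` below `F S`. -/
noncomputable def B (S : Set ℕ) : ℕ := sSup {s | s ∈ S ∧ s < F S}

/-- The multiplicity: the smallest positive element of `S`. -/
noncomputable def m (S : Set ℕ) : ℕ := sInf {s | s ∈ S ∧ 0 < s}

/-- The complement numerical set (for `S ≠ ℕ`). -/
noncomputable def Stilde (S : Set ℕ) : Set ℕ :=
  {x | ∃ s ∈ S, s ≤ B S ∧ x = B S - s} ∪ {n | B S ≤ n}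

-- The complement operation, with the convention that the complement of ℕ is ℕ.
open Classical in
noncomputable def complOp (S : Set ℕ) : Set ℕ :=
  if S = Set.univ then Set.univ else Stilde S

/-- The genus: the number of gaps. -/
noncomputable def genus (S : Set ℕ) : ℕ := Sᶜ.ncard

/-- The number of boxes with hook length 1. -/
noncomputable def c1 (S : Set ℕ) : ℕ := {n | n ∈ S ∧ n + 1 ∉ S}.ncard

/-- An atom: a positive element not a sum of two positive elements. -/
def IsAtomOf (S : Set ℕ) (a : ℕ) : Prop :=
  a ∈ S ∧ 0 < a ∧ ¬ ∃ x ∈ S, ∃ y ∈ S, 0 < x ∧ 0 < y ∧ a = x + y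

/-- A small atom: an atom smaller than the Frobenius number. -/
def IsSmallAtom (S : Set ℕ) (a : ℕ) : Prop := IsAtomOf S a ∧ a < F S

/-- The embedding dimension: the number of atoms. -/
noncomputable def numAtoms (S : Set ℕ) : ℕ := {a | IsAtomOf S a}.ncard

/-- Maximal embedding dimension. -/
def MaxED (S : Set ℕ) : Prop := numAtoms S = m S


/-! Write `T` for `Stilde S`. Below `B`, membership in `A(T)` says that `s - x ∈ S` whenever
`x < s ≤ B` and `s ∈ S`. Applied to the first multiple of `m` above `x`, this forces `m ∣ x`.

If `m` is the only small atom, every element of `S` below `F` is a multiple of `m`; then the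
multiples of `m` below `B` all lie in `A(T)`, and the only one of them that is an atom is `m`.

If `a₂ ≠ m` is the least other small atom, no `0 < x < B` lies in `A(T)`: when `x + a₂ ≤ B`,
`s = x - m + a₂` gives `a₂ - m ∈ S`, contradicting that `a₂` is an atom; otherwise the largest
`t ≤ B` with `t ≡ a₂ (mod m)` gives `t - x ∈ S`, below `a₂` but not a multiple of `m`.
Hence `A(T) = {0} ∪ [B, ∞)`, and `F(T) = B - 1` because `1 ∉ S`. -/

theorem lt_of_lt_F {X : Set ℕ} {a b : ℕ} (hX : ∀ n, b ≤ n → n ∈ X) (ha : a < F X) : a < b := by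
  have : F X ≤ b - 1 := csSup_le' fun n hn => by have := mt (hX n) hn; omega
  omega

theorem eq_of_isAtomOf_of_dvd {X : Set ℕ} {a d : ℕ} (hX : ∀ n, d ∣ n → n < a → n ∈ X)
    (ha : IsAtomOf X a) (hd : d ∣ a) : a = d := by
  obtain ⟨k, rfl⟩ := hd
  obtain ⟨-, ha0, hsum⟩ := ha
  have hd0 : 0 < d := Nat.pos_of_mul_pos_right ha0
  rcases k with _ | _ | j
  · simp at ha0
  · simp
  · refine absurd ⟨d, hX d dvd_rfl (by nlinarith), d * (j + 1),
      hX _ (dvd_mul_right _ _) (by nlinarith), hd0, by positivity, by ring⟩ hsum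

section Base

variable {S : Set ℕ} {s x : ℕ}

theorem m_le (hs : s ∈ S) (hs0 : 0 < s) : m S ≤ s :=
  Nat.sInf_le ⟨hs, hs0⟩

theorem m_dvd_of_atoms_eq_m {c : ℕ} (hc : ∀ a, IsAtomOf S a → a < c → a = m S) (hs : s ∈ S)
    (hsc : s < c) : m S ∣ s := by
  induction s using Nat.strong_induction_on with
  | _ s ih =>
  rcases Nat.eq_zero_or_pos s with rfl | hs0
  · exact dvd_zero _
  by_cases hsum : ∃ u ∈ S, ∃ v ∈ S, 0 < u ∧ 0 < v ∧ s = u + v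
  · obtain ⟨u, hu, v, hv, hu0, hv0, rfl⟩ := hsum
    exact dvd_add (ih u (by omega) hu (by omega)) (ih v (by omega) hv (by omega))
  · rw [hc s ⟨hs, hs0, hsum⟩ hsc]

theorem exists_min_small_atom_of_ne_m (h : ¬ ∀ a, IsSmallAtom S a → a = m S) :
    ∃ a₂, IsSmallAtom S a₂ ∧ m S < a₂ ∧ ∀ a, IsSmallAtom S a → a < a₂ → a = m S := by
  classical
  push Not at h
  obtain ⟨ha₂, hne⟩ := Nat.find_spec h
  refine ⟨Nat.find h, ha₂, (m_le ha₂.1.1 ha₂.1.2.1).lt_of_ne hne.symm, fun a ha hlt => ?_⟩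
  by_contra hne
  exact Nat.find_min h hlt ⟨ha, hne⟩

theorem B_eq_zero_or_mem_of_lt_F (S : Set ℕ) : B S = 0 ∨ (B S ∈ S ∧ B S < F S) := by
  rcases {s | s ∈ S ∧ s < F S}.eq_empty_or_nonempty with h | h
  · left
    simp [B, h]
  · exact Or.inr (Nat.sSup_mem h ⟨F S, fun s hs => hs.2.le⟩)

theorem B_mem (h0 : 0 ∈ S) : B S ∈ S :=
  (B_eq_zero_or_mem_of_lt_F S).elim (fun h => h ▸ h0) And.left

theorem B_lt_F (hB : 0 < B S) : B S < F S :=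
  (B_eq_zero_or_mem_of_lt_F S).elim (fun h => absurd h hB.ne') And.right

theorem le_B (hs : s ∈ S) (h : s < F S) : s ≤ B S :=
  le_csSup ⟨F S, fun _ ht => ht.2.le⟩ ⟨hs, h⟩

theorem mem_Stilde_iff : x ∈ Stilde S ↔ B S ≤ x ∨ B S - x ∈ S := by
  constructor
  · rintro (⟨s, hs, hsB, rfl⟩ | h)
    · rw [Nat.sub_sub_self hsB]
      exact Or.inr hs
    · exact Or.inl h
  · rintro (h | h)
    · exact Or.inr h
    · rcases le_or_gt (B S) x with hxB | hxB
      · exact Or.inr hxB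
      · exact Or.inl ⟨B S - x, h, Nat.sub_le _ _, (Nat.sub_sub_self hxB.le).symm⟩

theorem mem_A_Stilde_of_B_le (h : B S ≤ x) : x ∈ A (Stilde S) :=
  ⟨mem_Stilde_iff.2 (Or.inl h), fun _ _ => mem_Stilde_iff.2 (Or.inl (by omega))⟩

theorem zero_mem_A_Stilde (h0 : 0 ∈ S) : 0 ∈ A (Stilde S) :=
  ⟨mem_Stilde_iff.2 (Or.inr (B_mem h0)), fun t ht => by rwa [zero_add]⟩

theorem lt_B_of_isSmallAtom_A_Stilde {a : ℕ} (ha : IsSmallAtom (A (Stilde S)) a) : a < B S :=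
  lt_of_lt_F (fun _ => mem_A_Stilde_of_B_le) ha.2

theorem mem_A_Stilde_iff (h0 : 0 ∈ S) (hxB : x < B S) :
    x ∈ A (Stilde S) ↔ ∀ s ∈ S, x < s → s ≤ B S → s - x ∈ S := by
  constructor
  · rintro ⟨-, hx⟩ s hs hxs hsB
    have hs' : B S - s ∈ Stilde S := mem_Stilde_iff.2 (Or.inr (by rwa [Nat.sub_sub_self hsB]))
    rcases mem_Stilde_iff.1 (hx _ hs') with h | h
    · omega
    · rwa [show B S - (x + (B S - s)) = s - x by omega] at h
  · intro hP
    refine ⟨mem_Stilde_iff.2 (Or.inr (hP _ (B_mem h0) hxB le_rfl)), fun t ht => ?_⟩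
    rcases mem_Stilde_iff.1 ht with ht | ht
    · exact mem_Stilde_iff.2 (Or.inl (by omega))
    · rcases le_or_gt (B S) (x + t) with hxt | hxt
      · exact mem_Stilde_iff.2 (Or.inl hxt)
      · have := hP (B S - t) ht (by omega) (Nat.sub_le _ _)
        exact mem_Stilde_iff.2 (Or.inr (by rwa [show B S - (x + t) = B S - t - x by omega]))

theorem F_Stilde (h1 : 1 ∉ S) (hB : 0 < B S) : F (Stilde S) = B S - 1 := by
  refine IsGreatest.csSup_eq ⟨fun h => ?_, fun n hn => ?_⟩
  · rcases mem_Stilde_iff.1 h with h | h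
    · omega
    · exact h1 (by rwa [show B S - (B S - 1) = 1 by omega] at h)
  · by_contra hlt
    exact hn (mem_Stilde_iff.2 (Or.inl (by omega)))

end Base

namespace IsNumericalSemigroup

variable {S : Set ℕ} {a n w x : ℕ}

theorem zero_mem (hS : IsNumericalSemigroup S) : 0 ∈ S := hS.1.1

theorem add_mem (hS : IsNumericalSemigroup S) (ha : a ∈ S) (hb : n ∈ S) : a + n ∈ S :=
  hS.2 a ha n hb

theorem mul_mem (hS : IsNumericalSemigroup S) (ha : a ∈ S) (k : ℕ) : a * k ∈ S := by
  induction k with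
  | zero => exact hS.zero_mem
  | succ k ih => exact hS.add_mem ih ha

theorem mem_of_F_lt (hS : IsNumericalSemigroup S) (h : F S < n) : n ∈ S := by
  by_contra hn
  exact (le_csSup hS.1.2.bddAbove hn).not_gt h

theorem m_mem_and_pos (hS : IsNumericalSemigroup S) : m S ∈ S ∧ 0 < m S :=
  Nat.sInf_mem (s := {s | s ∈ S ∧ 0 < s})
    ⟨F S + 1, hS.mem_of_F_lt (Nat.lt_succ_self _), Nat.succ_pos _⟩

theorem mem_of_m_dvd (hS : IsNumericalSemigroup S) (h : m S ∣ n) : n ∈ S := by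
  obtain ⟨k, rfl⟩ := h
  exact hS.mul_mem hS.m_mem_and_pos.1 k

theorem one_notMem_of_isAtomOf (hS : IsNumericalSemigroup S) (ha : IsAtomOf S a) (h2 : 2 ≤ a) :
    1 ∉ S := fun h1 =>
  ha.2.2 ⟨1, h1, a - 1, by simpa using hS.mul_mem h1 (a - 1), one_pos, by omega, by omega⟩

theorem add_m_le_B_of_mem_A_Stilde (hS : IsNumericalSemigroup S) (hx : x ∈ A (Stilde S))
    (hxB : x < B S) : x + m S ≤ B S := by
  have := (mem_A_Stilde_iff hS.zero_mem hxB).1 hx _ (B_mem hS.zero_mem) hxB le_rfl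
  have := m_le this (by omega)
  omega

theorem m_dvd_of_mem_A_Stilde (hS : IsNumericalSemigroup S) (hx : x ∈ A (Stilde S))
    (hxB : x < B S) : m S ∣ x := by
  have hm := hS.m_mem_and_pos.2
  have hxm := hS.add_m_le_B_of_mem_A_Stilde hx hxB
  have hnext : x < m S * (x / m S + 1) := Nat.lt_mul_div_succ x hm
  have hprev := Nat.div_add_mod x (m S)
  have := (mem_A_Stilde_iff hS.zero_mem hxB).1 hx _ (hS.mem_of_m_dvd (dvd_mul_right _ _)) hnext
    (by rw [Nat.mul_succ]; omega)
  have := m_le this (by omega)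
  rw [Nat.mul_succ] at this
  exact Nat.dvd_of_mod_eq_zero (by omega)

theorem mem_A_Stilde_of_m_dvd (hS : IsNumericalSemigroup S)
    (hdvd : ∀ s ∈ S, s < F S → m S ∣ s) (hw : m S ∣ w) (hwB : w < B S) : w ∈ A (Stilde S) :=
  (mem_A_Stilde_iff hS.zero_mem hwB).2 fun s hs hws hsB =>
    hS.mem_of_m_dvd (Nat.dvd_sub (hdvd s hs (hsB.trans_lt (B_lt_F (by omega)))) hw)

theorem eq_m_of_isSmallAtom_A_Stilde (hS : IsNumericalSemigroup S)
    (hu : ∀ a, IsSmallAtom S a → a = m S) (ha : IsSmallAtom (A (Stilde S)) a) : a = m S := by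
  have hdvd : ∀ s ∈ S, s < F S → m S ∣ s :=
    fun s => m_dvd_of_atoms_eq_m fun a ha haF => hu a ⟨ha, haF⟩
  have haB := lt_B_of_isSmallAtom_A_Stilde ha
  exact eq_of_isAtomOf_of_dvd (fun n hn hna => hS.mem_A_Stilde_of_m_dvd hdvd hn (hna.trans haB))
    ha.1 (hS.m_dvd_of_mem_A_Stilde ha.1.1 haB)

theorem notMem_A_Stilde_of_second_small_atom (hS : IsNumericalSemigroup S) {a₂ : ℕ}
    (ha₂ : IsSmallAtom S a₂) (hma₂ : m S < a₂)
    (hmin : ∀ a, IsSmallAtom S a → a < a₂ → a = m S) (hx0 : 0 < x) (hxB : x < B S) :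
    x ∉ A (Stilde S) := by
  intro hx
  have hP := (mem_A_Stilde_iff hS.zero_mem hxB).1 hx
  obtain ⟨hmS, hm⟩ := hS.m_mem_and_pos
  obtain ⟨ha₂A, ha₂F⟩ := ha₂
  have ha₂S := ha₂A.1
  have hxm := hS.add_m_le_B_of_mem_A_Stilde hx hxB
  obtain ⟨k, rfl⟩ := hS.m_dvd_of_mem_A_Stilde hx hxB
  rcases le_or_gt (m S * k + a₂) (B S) with hle | hlt
  · obtain ⟨j, rfl⟩ : ∃ j, k = j + 1 := ⟨k - 1, by have := Nat.pos_of_mul_pos_left hx0; omega⟩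
    have hs : m S * j + a₂ ∈ S := hS.add_mem (hS.mul_mem hmS j) ha₂S
    have := hP _ hs (by rw [Nat.mul_succ]; omega) (by rw [Nat.mul_succ] at hle; omega)
    rw [Nat.mul_succ, show m S * j + a₂ - (m S * j + m S) = a₂ - m S by omega] at this
    exact ha₂A.2.2 ⟨m S, hmS, a₂ - m S, this, hm, by omega, by omega⟩
  · have hq := Nat.div_add_mod (B S - a₂) (m S)
    have hr := Nat.mod_lt (B S - a₂) hm
    have ha₂B := le_B ha₂S ha₂F
    set t := a₂ + m S * ((B S - a₂) / m S)
    have htS : t ∈ S := hS.add_mem ha₂S (hS.mul_mem hmS _)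
    have hdiff := hP t htS (by omega) (by omega)
    have hdvd : m S ∣ t - m S * k :=
      m_dvd_of_atoms_eq_m (fun a ha haa => hmin a ⟨ha, haa.trans ha₂F⟩ haa) hdiff (by omega)
    have hmt : m S ∣ t := by
      have := dvd_add hdvd (dvd_mul_right (m S) k)
      rwa [Nat.sub_add_cancel (by omega)] at this
    have hm_dvd_a₂ : m S ∣ a₂ := (Nat.dvd_add_left (dvd_mul_right _ _)).1 hmt
    exact hma₂.ne' (eq_of_isAtomOf_of_dvd (fun n hn _ => hS.mem_of_m_dvd hn) ha₂A hm_dvd_a₂)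

theorem A_Stilde_eq_of_second_small_atom (hS : IsNumericalSemigroup S) {a₂ : ℕ}
    (ha₂ : IsSmallAtom S a₂) (hma₂ : m S < a₂)
    (hmin : ∀ a, IsSmallAtom S a → a < a₂ → a = m S) :
    A (Stilde S) = {0} ∪ {n | B S ≤ n} := by
  ext n
  refine ⟨fun hn => ?_, ?_⟩
  · by_contra h
    simp only [mem_union, mem_singleton_iff, mem_ofPred_eq, not_or, not_le] at h
    exact hS.notMem_A_Stilde_of_second_small_atom ha₂ hma₂ hmin (Nat.pos_of_ne_zero h.1) h.2 hn
  · rintro (rfl | hn)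
    · exact zero_mem_A_Stilde hS.zero_mem
    · exact mem_A_Stilde_of_B_le hn

end IsNumericalSemigroup

theorem associated_of_complement_small_atoms_general (S : Set ℕ) (hS : IsNumericalSemigroup S) :
    {a | IsSmallAtom (A (Stilde S)) a}.ncard ≤ 1 ∧
      (2 ≤ {a | IsSmallAtom S a}.ncard →
        A (Stilde S) = {0} ∪ {n | F (Stilde S) + 1 ≤ n}) := by
  by_cases hu : ∀ a, IsSmallAtom S a → a = m S
  · refine ⟨?_, fun h2 => ?_⟩
    · calc {a | IsSmallAtom (A (Stilde S)) a}.ncard ≤ ({m S} : Set ℕ).ncard :=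
            ncard_le_ncard (fun a => hS.eq_m_of_isSmallAtom_A_Stilde hu) (finite_singleton _)
        _ = 1 := ncard_singleton _
    · obtain ⟨a, ha, hne⟩ := exists_ne_of_one_lt_ncard h2 (m S)
      exact absurd (hu a ha) hne
  · obtain ⟨a₂, ha₂, hma₂, hmin⟩ := exists_min_small_atom_of_ne_m hu
    have hm := hS.m_mem_and_pos.2
    have ha₂B := le_B ha₂.1.1 ha₂.2
    have hnone : {a | IsSmallAtom (A (Stilde S)) a} = ∅ := eq_empty_of_forall_notMem fun a ha =>
      hS.notMem_A_Stilde_of_second_small_atom ha₂ hma₂ hmin ha.1.2.1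
        (lt_B_of_isSmallAtom_A_Stilde ha) ha.1.1
    refine ⟨by simp [hnone], fun _ => ?_⟩
    rw [F_Stilde (hS.one_notMem_of_isAtomOf ha₂.1 (by omega)) (by omega),
      Nat.sub_add_cancel (by omega)]
    exact hS.A_Stilde_eq_of_second_small_atom ha₂ hma₂ hmin

theorem associated_of_complement_small_atoms (S : Set ℕ) (hS : IsNumericalSemigroup S)
    (hne : S ≠ Set.univ) :
    {a | IsSmallAtom (A (Stilde S)) a}.ncard ≤ 1 ∧
      (2 ≤ {a | IsSmallAtom S a}.ncard →
        A (Stilde S) = {0} ∪ {n | F (Stilde S) + 1 ≤ n}) :=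
  associated_of_complement_small_atoms_general S hS
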